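/- Let T > 0, σ ∈ ℕ, p ∈ [1,∞), and let P ⊆ ℝ_{≥0}^σ be a polytope, i.e., P = conv(F) for some finite set F ⊆ ℝ_{≥0}^σ. For b ∈ {0,1} and 0 ≤ t₁ ≤ … ≤ t_σ, let u_{b;t₁,…,t_σ} : [0,∞) → {0,1} be defined by u_{b;t₁,…,t_σ}(t) = b if |{i : t_i ≤ t}| is even and 1 − b otherwise. Define the set of switching point constraints D_P as the set of all u ∈ L^p(0,T) such that there exist b ∈ {0,1} and (t₁,…,t_σ) ∈ P with t₁ ≤ … ≤ t_σ and u = u_{b;t₁,…,t_σ} almost everywhere on (0,T). Then D_P is closed in L^p(0,T). -/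

import Mathlib

/-!
`D_P` is the image of the compact set `{0,1} × {t ∈ P | t monotone}` under `(b, t) ↦ u_{b;t}`,
hence compact and so closed, provided this map is continuous into `L^p` for each fixed `b`. That
holds for any finite measure without atoms: as `s → t`, `u_{b;s}(x)` is eventually `u_{b;t}(x)`
for every `x` off the finitely many switching points of `t`, and the functions are uniformly
bounded, so bounded convergence applies. -/

open MeasureTheory Set Filter
open scoped ENNReal Topology

/-- The parametrized binary step function `u_{b;t₁,…,t_σ}`: it takes the value
`b` at `x` if the number of switching points `t_i ≤ x` is even, and `1 - b`
otherwise. -/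
noncomputable def switchFun (σ : ℕ) (b : ℝ) (t : Fin σ → ℝ) : ℝ → ℝ :=
  fun x => if Even ((Finset.univ.filter fun i => t i ≤ x).card) then b else 1 - b

theorem MeasureTheory.unifIntegrable_of_norm_le {ι α β : Type*} {m : MeasurableSpace α}
    {μ : Measure α} [NormedAddCommGroup β] {p : ℝ≥0∞} (hp : 1 ≤ p) (hp' : p ≠ ∞)
    {f : ι → α → β} (hf : ∀ i, AEStronglyMeasurable (f i) μ) (C : ℝ)
    (hC : ∀ i x, ‖f i x‖ ≤ C) :
    UnifIntegrable f p μ := by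
  refine unifIntegrable_of hp hp' hf fun _ _ => ⟨C.toNNReal + 1, fun i => ?_⟩
  have hempty : {x | C.toNNReal + 1 ≤ ‖f i x‖₊} = ∅ := by
    refine eq_empty_of_forall_notMem fun x hx => ?_
    have := NNReal.coe_le_coe.2 hx
    push_cast at this
    linarith [Real.le_coe_toNNReal C, hC i x]
  simp [hempty]

namespace switchFun

variable {σ : ℕ}

theorem measurable (b : ℝ) (t : Fin σ → ℝ) : Measurable (switchFun σ b t) := by
  have hcard : Measurable fun x : ℝ => (Finset.univ.filter fun i => t i ≤ x).card := by
    simp only [Finset.card_filter]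
    exact Finset.measurable_sum _ fun i _ =>
      Measurable.ite measurableSet_Ici measurable_const measurable_const
  exact Measurable.ite (hcard (.of_discrete (s := {n | Even n}))) measurable_const
    measurable_const

theorem norm_le (b : ℝ) (t : Fin σ → ℝ) (x : ℝ) :
    ‖switchFun σ b t x‖ ≤ |b| + |1 - b| := by
  unfold switchFun
  split <;> simp

theorem eventually_eq_of_notMem_range (b : ℝ) {t : Fin σ → ℝ} {x : ℝ}
    (hx : x ∉ range t) :
    ∀ᶠ s in 𝓝 t, switchFun σ b s x = switchFun σ b t x := by
  have hside : ∀ i, ∀ᶠ s in 𝓝 t, (s i ≤ x ↔ t i ≤ x) := fun i => by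
    rcases (Ne.lt_or_gt fun h => hx ⟨i, h⟩) with h | h
    · filter_upwards [(continuous_apply i).continuousAt.eventually (eventually_lt_nhds h)]
        with s hs using iff_of_true hs.le h.le
    · filter_upwards [(continuous_apply i).continuousAt.eventually (eventually_gt_nhds h)]
        with s hs using iff_of_false hs.not_ge h.not_ge
  filter_upwards [eventually_all.2 hside] with s hs
  simp only [switchFun, Finset.filter_congr fun i _ => hs i]

variable {μ : Measure ℝ} [IsFiniteMeasure μ] {p : ℝ≥0∞}

theorem memLp (b : ℝ) (t : Fin σ → ℝ) : MemLp (switchFun σ b t) p μ :=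
  .of_bound (measurable b t).aestronglyMeasurable _ (.of_forall (norm_le b t))

variable (σ μ p) in
noncomputable def toLp (b : ℝ) (t : Fin σ → ℝ) : Lp ℝ p μ :=
  (memLp b t).toLp (switchFun σ b t)

theorem toLp_eq_iff {b : ℝ} {t : Fin σ → ℝ} {u : Lp ℝ p μ} :
    toLp σ μ p b t = u ↔ (u : ℝ → ℝ) =ᵐ[μ] switchFun σ b t := by
  rw [eq_comm, Lp.ext_iff]
  exact ⟨fun h => h.trans (memLp b t).coeFn_toLp,
    fun h => h.trans (memLp b t).coeFn_toLp.symm⟩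

theorem continuous_toLp [Fact (1 ≤ p)] [NullSingletonClass μ] (hp : p ≠ ∞) (b : ℝ) :
    Continuous (toLp σ μ p b) := by
  refine continuous_iff_seqContinuous.2 fun {s t} hs => ?_
  have hmeas n := (measurable b (s n)).aestronglyMeasurable (μ := μ)
  refine (Lp.tendsto_Lp_iff_tendsto_eLpNorm'' _ (fun n => memLp b (s n)) _ (memLp b t)).2 <|
    tendsto_Lp_finite_of_tendsto_ae Fact.out hp hmeas (memLp b t)
      (unifIntegrable_of_norm_le Fact.out hp hmeas _ fun n => norm_le b (s n)) ?_
  filter_upwards [measure_eq_zero_iff_ae_notMem.1 ((finite_range t).measure_zero μ)] with x hx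
  exact tendsto_nhds_of_eventually_eq (hs.eventually (eventually_eq_of_notMem_range b hx))

end switchFun

theorem stmt_14_general
    (T : ℝ) (σ : ℕ) (p : ℝ≥0∞) [Fact (1 ≤ p)] (hp : p ≠ ⊤)
    (F : Finset (Fin σ → ℝ)) :
    IsClosed {u : Lp ℝ p (volume.restrict (Ioo (0:ℝ) T)) |
      ∃ b : ℝ, (b = 0 ∨ b = 1) ∧ ∃ t : Fin σ → ℝ, Monotone t ∧
        t ∈ convexHull ℝ (F : Set (Fin σ → ℝ)) ∧
        (u : ℝ → ℝ) =ᵐ[volume.restrict (Ioo (0:ℝ) T)] switchFun σ b t} := by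
  set S := {t : Fin σ → ℝ | Monotone t} ∩ convexHull ℝ (F : Set (Fin σ → ℝ))
  have hS : IsCompact S := (F.finite_toSet.isCompact_convexHull ℝ).inter_left isClosed_monotone
  convert ((toFinite ({0, 1} : Set ℝ)).isCompact_biUnion fun b _ =>
    hS.image (switchFun.continuous_toLp (μ := volume.restrict (Ioo 0 T)) hp b)).isClosed using 1
  ext u
  simp [S, switchFun.toLp_eq_iff, and_assoc]

/-- Lemma of Section 3.2, closedness: for a polytope
`P = conv F ⊆ ℝ_{≥0}^σ`, the set `D_P` of switching point constraints, i.e. of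
all `u ∈ L^p(0,T)` agreeing a.e. with some `u_{b;t₁,…,t_σ}` with binary `b`
and sorted `(t₁,…,t_σ) ∈ P`, is closed in `L^p(0,T)`. -/
theorem stmt_14
    (T : ℝ) (hT : 0 < T) (σ : ℕ) (p : ℝ≥0∞) [Fact (1 ≤ p)] (hp : p ≠ ⊤)
    (F : Finset (Fin σ → ℝ)) (hF : ∀ x ∈ F, ∀ i, 0 ≤ x i) :
    IsClosed {u : Lp ℝ p (volume.restrict (Ioo (0:ℝ) T)) |
      ∃ b : ℝ, (b = 0 ∨ b = 1) ∧ ∃ t : Fin σ → ℝ, Monotone t ∧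
        t ∈ convexHull ℝ (F : Set (Fin σ → ℝ)) ∧
        (u : ℝ → ℝ) =ᵐ[volume.restrict (Ioo (0:ℝ) T)] switchFun σ b t} :=
  stmt_14_general T σ p hp F
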